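/- Let ρ_AB be a separable bipartite state on ℂ^{d_A} ⊗ ℂ^{d_B}, let {M^A_α}_{α=1}^{d_A²} be a GSIC-POVM on ℂ^{d_A} with parameter a_A and {M^B_β}_{β=1}^{d_B²} a GSIC-POVM on ℂ^{d_B} with parameter a_B, and let G(ρ_AB) be the d_A²×d_B² matrix with entries tr((M^A_α ⊗ M^B_β) ρ_AB). Then ‖G(ρ_AB)‖_tr ≤ √((a_A d_A² + 1)/(d_A(d_A+1))) · √((a_B d_B² + 1)/(d_B(d_B+1))). -/

import Mathlib

open scoped BigOperators ComplexOrder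
open Matrix

noncomputable def traceNorm {m n : Type*} [Fintype m] [Fintype n] [DecidableEq n]
    (X : Matrix m n ℂ) : ℝ :=
  ((Matrix.posSemidef_conjTranspose_mul_self X).1.eigenvectorUnitary.1 *
    diagonal (((↑) : ℝ → ℂ) ∘ Real.sqrt ∘ (Matrix.posSemidef_conjTranspose_mul_self X).1.eigenvalues) *
    (star (Matrix.posSemidef_conjTranspose_mul_self X).1.eigenvectorUnitary : Matrix n n ℂ)).trace.re

def IsDensityMatrix {ι : Type*} [Fintype ι] (ρ : Matrix ι ι ℂ) : Prop :=
  ρ.PosSemidef ∧ ρ.trace = 1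

def IsNMPOVM (d N M : ℕ) (x : ℝ)
    (E : Fin N → Fin M → Matrix (Fin d) (Fin d) ℂ) : Prop :=
  (∀ α k, (E α k).PosSemidef) ∧
  (∀ α, ∑ k, E α k = 1) ∧
  (∀ α k, (E α k).trace = (((d : ℝ) / M : ℝ) : ℂ)) ∧
  (∀ α k, (E α k * E α k).trace = (x : ℂ)) ∧
  (∀ α k l, k ≠ l → (E α k * E α l).trace =
      ((((d : ℝ) - M * x) / (M * ((M : ℝ) - 1)) : ℝ) : ℂ)) ∧
  (∀ α β k l, α ≠ β → (E α k * E β l).trace = (((d : ℝ) / M ^ 2 : ℝ) : ℂ)) ∧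
  ((d : ℝ) / M ^ 2 < x ∧ x ≤ min ((d : ℝ) ^ 2 / M ^ 2) ((d : ℝ) / M))

def IsInfoComplete (d N M : ℕ) : Prop := ((M : ℝ) - 1) * N = (d : ℝ) ^ 2 - 1
open Kronecker

/-- Partial trace over the second factor. -/
noncomputable def ptraceB {dA dB : ℕ} (ρ : Matrix (Fin dA × Fin dB) (Fin dA × Fin dB) ℂ) :
    Matrix (Fin dA) (Fin dA) ℂ :=
  Matrix.of fun i j => ∑ k, ρ (i, k) (j, k)

/-- Partial trace over the first factor. -/
noncomputable def ptraceA {dA dB : ℕ} (ρ : Matrix (Fin dA × Fin dB) (Fin dA × Fin dB) ℂ) :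
    Matrix (Fin dB) (Fin dB) ℂ :=
  Matrix.of fun i j => ∑ k, ρ (k, i) (k, j)

/-- A bipartite state is separable if it is a finite convex combination of
tensor products of local density matrices. -/
def SeparableState {dA dB : ℕ} (ρ : Matrix (Fin dA × Fin dB) (Fin dA × Fin dB) ℂ) : Prop :=
  ∃ (K : ℕ) (p : Fin K → ℝ) (ρA : Fin K → Matrix (Fin dA) (Fin dA) ℂ)
    (ρB : Fin K → Matrix (Fin dB) (Fin dB) ℂ),
    (∀ i, 0 ≤ p i) ∧ (∑ i, p i = 1) ∧
    (∀ i, IsDensityMatrix (ρA i)) ∧ (∀ i, IsDensityMatrix (ρB i)) ∧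
    ρ = ∑ i, (p i : ℂ) • (ρA i ⊗ₖ ρB i)
/-- A general symmetric informationally complete POVM (GSIC-POVM) on ℂ^d with
parameter a. -/
def IsGSICPOVM (d : ℕ) (a : ℝ) (Ms : Fin (d ^ 2) → Matrix (Fin d) (Fin d) ℂ) : Prop :=
  (∀ α, (Ms α).PosSemidef) ∧ (∑ α, Ms α = 1) ∧
  (∀ α, (Ms α * Ms α).trace = (a : ℂ)) ∧
  (∀ α β, α ≠ β → (Ms α * Ms β).trace =
      (((1 - (d : ℝ) * a) / ((d : ℝ) * ((d : ℝ) ^ 2 - 1)) : ℝ) : ℂ)) ∧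
  (1 / (d : ℝ) ^ 3 < a ∧ a ≤ 1 / (d : ℝ) ^ 2)

/-!
If `ρ = ∑ᵢ pᵢ ρᴬᵢ ⊗ ρᴮᵢ`, the correlation matrix factors as `G = C Dᵀ` with
`C_{αi} = √pᵢ tr(Mᴬ_α ρᴬᵢ)` and `D_{βi} = √pᵢ tr(Mᴮ_β ρᴮᵢ)`. The trace norm of a product is
at most the product of the Frobenius norms: pair `C Dᵀ` with the contraction coming from its
polar decomposition and apply Cauchy–Schwarz. Each Frobenius norm is then controlled column by
column: the Gram matrix of a GSIC-POVM is `(a - c) I + c J`, and Bessel's inequality for such a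
family gives, for every state `σ`,
`∑_α tr(M_α σ)² ≤ (a - c) tr σ² + c d ≤ (a - c) + c d = (a d² + 1) / (d (d + 1))`.
-/

lemma sum_sq_le_of_forall_two_mul_sum_sub_le {ι : Type*} [Fintype ι] {t : ι → ℝ} {a c P : ℝ}
    (hca : c < a) (hu : 0 < a + (Fintype.card ι - 1) * c)
    (h : ∀ w : ι → ℝ, 2 * ∑ α, w α * t α - ((a - c) * ∑ α, w α ^ 2 + c * (∑ α, w α) ^ 2) ≤ P) :
    ∑ α, t α ^ 2 ≤ (a - c) * P + c * (∑ α, t α) ^ 2 / (a + (Fintype.card ι - 1) * c) := by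
  set T := ∑ α, t α
  set N : ℝ := (Fintype.card ι : ℝ)
  set u := a + (N - 1) * c with hu_def
  clear_value u
  set k := c * T / u
  have hs : 0 < a - c := sub_pos.mpr hca
  -- the optimal weights: they solve `((a - c) I + c J) w = t`
  have key := h fun α => (t α - k) / (a - c)
  have hwt : ∑ α, (t α - k) / (a - c) * t α = (∑ α, t α ^ 2 - k * T) / (a - c) := by
    simp only [div_mul_eq_mul_div, ← Finset.sum_div, sub_mul, Finset.sum_sub_distrib,
      ← Finset.mul_sum, sq, T]
  have hww : ∑ α, ((t α - k) / (a - c)) ^ 2 =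
      (∑ α, t α ^ 2 - 2 * k * T + N * k ^ 2) / (a - c) ^ 2 := by
    simp only [div_pow, ← Finset.sum_div, sub_sq, Finset.sum_add_distrib, Finset.sum_sub_distrib,
      ← Finset.sum_mul, ← Finset.mul_sum, Finset.sum_const, nsmul_eq_mul, Finset.card_univ, T, N]
    ring_nf
  have hw : ∑ α, (t α - k) / (a - c) = (T - N * k) / (a - c) := by
    simp only [← Finset.sum_div, Finset.sum_sub_distrib, Finset.sum_const, nsmul_eq_mul,
      Finset.card_univ, T, N]
  rw [hwt, hww, hw] at key
  have hid : N * k ^ 2 + c * (T - N * k) ^ 2 / (a - c) = c * T ^ 2 / u := by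
    have hs' : a - c ≠ 0 := hs.ne'
    have hu' : u ≠ 0 := hu.ne'
    simp only [k]
    field_simp
    rw [hu_def]
    ring
  have hkey : 2 * ((∑ α, t α ^ 2 - k * T) / (a - c)) -
      ((a - c) * ((∑ α, t α ^ 2 - 2 * k * T + N * k ^ 2) / (a - c) ^ 2) +
        c * ((T - N * k) / (a - c)) ^ 2) =
      (∑ α, t α ^ 2 - (N * k ^ 2 + c * (T - N * k) ^ 2 / (a - c))) / (a - c) := by
    field_simp
    ring
  rw [hkey, hid, div_le_iff₀ hs] at key
  linarith

open scoped Matrix.Norms.Frobenius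
open WithLp

namespace Matrix

variable {m n k ι κ : Type*} [Fintype m] [Fintype n] [Fintype k] [Fintype ι] [Fintype κ]

lemma trace_conjTranspose_mul_eq_inner (A B : Matrix m n ℂ) :
    (Aᴴ * B).trace =
      inner ℂ (toLp 2 fun i => toLp 2 (A i) : PiLp 2 fun _ : m => EuclideanSpace ℂ n)
        (toLp 2 fun i => toLp 2 (B i)) := by
  simp [trace, mul_apply, PiLp.inner_apply, Finset.sum_comm (γ := m), mul_comm]

lemma re_trace_conjTranspose_mul_le (A B : Matrix m n ℂ) :
    (Aᴴ * B).trace.re ≤ ‖A‖ * ‖B‖ := by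
  rw [trace_conjTranspose_mul_eq_inner]
  exact re_inner_le_norm (𝕜 := ℂ) _ _

lemma frobenius_norm_sq_eq_re_trace (A : Matrix m n ℂ) : ‖A‖ ^ 2 = (Aᴴ * A).trace.re := by
  rw [trace_conjTranspose_mul_eq_inner]
  exact (inner_self_eq_norm_sq (𝕜 := ℂ)
    (toLp 2 fun i => toLp 2 (A i) : PiLp 2 fun _ : m => EuclideanSpace ℂ n)).symm

lemma frobenius_norm_sq_eq_sum (A : Matrix m n ℂ) : ‖A‖ ^ 2 = ∑ i, ∑ j, ‖A i j‖ ^ 2 := by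
  rw [frobenius_norm_def, ← Real.rpow_natCast, ← Real.rpow_mul (by positivity)]
  norm_num

lemma PosSemidef.frobenius_norm_le_re_trace {σ : Matrix n n ℂ} (hσ : σ.PosSemidef) :
    ‖σ‖ ≤ σ.trace.re := by
  classical
  obtain ⟨B, rfl⟩ : ∃ B : Matrix n n ℂ, σ = star B * B := by
    open scoped MatrixOrder in exact CStarAlgebra.nonneg_iff_eq_star_mul_self.mp hσ.nonneg
  calc ‖star B * B‖ ≤ ‖B‖ * ‖B‖ := by
        simpa only [star_eq_conjTranspose, frobenius_norm_conjTranspose] using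
          frobenius_norm_mul Bᴴ B
    _ = (star B * B).trace.re := by rw [← sq, frobenius_norm_sq_eq_re_trace]; rfl

lemma frobenius_norm_mul_conjTranspose_le [DecidableEq n] {W : Matrix m n ℂ}
    (hW : (1 - Wᴴ * W).PosSemidef) (B : Matrix k n ℂ) : ‖B * Wᴴ‖ ≤ ‖B‖ := by
  have hgap : 0 ≤ (B * (1 - Wᴴ * W) * Bᴴ).trace.re :=
    (Complex.nonneg_iff.mp (hW.mul_mul_conjTranspose_same B).trace_nonneg).1
  have hsq : ‖B * Wᴴ‖ ^ 2 ≤ ‖B‖ ^ 2 := by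
    rw [frobenius_norm_sq_eq_re_trace, ← frobenius_norm_conjTranspose B,
      frobenius_norm_sq_eq_re_trace, conjTranspose_conjTranspose]
    have : (B * (1 - Wᴴ * W) * Bᴴ).trace = (B * Bᴴ).trace - ((B * Wᴴ)ᴴ * (B * Wᴴ)).trace := by
      rw [Matrix.mul_sub, Matrix.sub_mul, Matrix.mul_one, trace_sub, trace_mul_comm (B * Wᴴ)ᴴ,
        conjTranspose_mul, conjTranspose_conjTranspose]
      simp only [Matrix.mul_assoc]
    rw [this, Complex.sub_re] at hgap
    linarith
  exact (pow_le_pow_iff_left₀ (norm_nonneg _) (norm_nonneg _) two_ne_zero).mp hsq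

lemma re_trace_conjTranspose_mul_mul_le [DecidableEq n] {W : Matrix m n ℂ}
    (hW : (1 - Wᴴ * W).PosSemidef) (A : Matrix m k ℂ) (B : Matrix k n ℂ) :
    (Wᴴ * (A * B)).trace.re ≤ ‖A‖ * ‖B‖ := by
  calc (Wᴴ * (A * B)).trace.re = (Aᴴᴴ * (B * Wᴴ)).trace.re := by
        rw [conjTranspose_conjTranspose, trace_mul_comm, Matrix.mul_assoc]
    _ ≤ ‖Aᴴ‖ * ‖B * Wᴴ‖ := re_trace_conjTranspose_mul_le _ _
    _ ≤ ‖A‖ * ‖B‖ := by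
        rw [frobenius_norm_conjTranspose]
        exact mul_le_mul_of_nonneg_left (frobenius_norm_mul_conjTranspose_le hW B) (norm_nonneg _)

lemma IsHermitian.conjTranspose_eigenvectorUnitary_mul_mul [DecidableEq n] {H : Matrix n n ℂ}
    (hH : H.IsHermitian) :
    (hH.eigenvectorUnitary : Matrix n n ℂ)ᴴ * H * hH.eigenvectorUnitary =
      diagonal (fun i => (hH.eigenvalues i : ℂ)) := by
  have := hH.conjStarAlgAut_star_eigenvectorUnitary
  rwa [Unitary.conjStarAlgAut_star_apply] at this

lemma traceNorm_eq_sum_sqrt_eigenvalues [DecidableEq n] (M : Matrix m n ℂ) :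
    traceNorm M = ∑ i, √((posSemidef_conjTranspose_mul_self M).1.eigenvalues i) := by
  have hU := (posSemidef_conjTranspose_mul_self M).1.eigenvectorUnitary.2
  unfold traceNorm
  rw [trace_mul_cycle, mem_unitaryGroup_iff'.mp hU, Matrix.one_mul]
  simp [trace_diagonal]

/-- The witness is `W = M |M|⁺`, with `|M|⁺` the pseudo-inverse of `|M| = √(Mᴴ M)`. -/
lemma exists_contraction_traceNorm_eq [DecidableEq n] (M : Matrix m n ℂ) :
    ∃ W : Matrix m n ℂ, (1 - Wᴴ * W).PosSemidef ∧ traceNorm M = (Wᴴ * M).trace.re := by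
  set hM := posSemidef_conjTranspose_mul_self M
  set hH := hM.1
  set U : Matrix n n ℂ := hH.eigenvectorUnitary.1
  set lam := hH.eigenvalues
  have hUU' : U * Uᴴ = 1 := mem_unitaryGroup_iff.mp hH.eigenvectorUnitary.2
  have hdiag : Uᴴ * (Mᴴ * M) * U = diagonal (fun i => (lam i : ℂ)) :=
    hH.conjTranspose_eigenvectorUnitary_mul_mul
  -- `(√0)⁻¹ = 0`, so `D` is the pseudo-inverse of `√(diagonal lam)`
  set D : Matrix n n ℂ := diagonal (fun i => ((√(lam i))⁻¹ : ℝ))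
  have hD : Dᴴ = D := by simp [D, diagonal_conjTranspose]
  refine ⟨M * U * D * Uᴴ, ?_, ?_⟩
  · have hWW : (M * U * D * Uᴴ)ᴴ * (M * U * D * Uᴴ) =
        U * diagonal (fun i => (((√(lam i))⁻¹ ^ 2 * lam i : ℝ) : ℂ)) * Uᴴ := by
      calc (M * U * D * Uᴴ)ᴴ * (M * U * D * Uᴴ) = U * (D * (Uᴴ * (Mᴴ * M) * U) * D) * Uᴴ := by
            simp only [conjTranspose_mul, conjTranspose_conjTranspose, hD, Matrix.mul_assoc]
        _ = _ := by
            rw [hdiag, diagonal_mul_diagonal, diagonal_mul_diagonal]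
            refine congrArg (U * · * Uᴴ) (congrArg diagonal (funext fun i => ?_))
            push_cast; ring
    have hgap : 1 - (M * U * D * Uᴴ)ᴴ * (M * U * D * Uᴴ) =
        U * diagonal (fun i => ((1 - (√(lam i))⁻¹ ^ 2 * lam i : ℝ) : ℂ)) * Uᴴ := by
      calc 1 - (M * U * D * Uᴴ)ᴴ * (M * U * D * Uᴴ)
          = U * 1 * Uᴴ - U * diagonal (fun i => (((√(lam i))⁻¹ ^ 2 * lam i : ℝ) : ℂ)) * Uᴴ := by
            rw [Matrix.mul_one, hUU', hWW]
        _ = _ := by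
            rw [← Matrix.sub_mul, ← Matrix.mul_sub, ← diagonal_one, diagonal_sub]
            push_cast; rfl
    rw [hgap]
    refine PosSemidef.mul_mul_conjTranspose_same (posSemidef_diagonal_iff.mpr fun i => ?_) U
    rw [Complex.zero_le_real, sub_nonneg, inv_pow, Real.sq_sqrt (hM.eigenvalues_nonneg i)]
    exact inv_mul_le_one
  · rw [traceNorm_eq_sum_sqrt_eigenvalues]
    calc ∑ i, √(lam i) = (D * (Uᴴ * (Mᴴ * M) * U)).trace.re := by
          rw [hdiag, diagonal_mul_diagonal, trace_diagonal, Complex.re_sum]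
          simp [inv_mul_eq_div, Real.div_sqrt]
      _ = _ := by
          simp only [conjTranspose_mul, conjTranspose_conjTranspose, hD, Matrix.mul_assoc]
          rw [trace_mul_comm U]
          simp only [Matrix.mul_assoc]

theorem traceNorm_mul_le [DecidableEq n] (A : Matrix m k ℂ) (B : Matrix k n ℂ) :
    traceNorm (A * B) ≤ ‖A‖ * ‖B‖ := by
  obtain ⟨W, hW, hnorm⟩ := exists_contraction_traceNorm_eq (A * B)
  exact hnorm ▸ re_trace_conjTranspose_mul_mul_le hW A B

lemma IsHermitian.ofReal_re_trace_mul {X Y : Matrix n n ℂ} (hX : X.IsHermitian)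
    (hY : Y.IsHermitian) : ((X * Y).trace.re : ℂ) = (X * Y).trace := by
  rw [← Complex.conj_eq_iff_re, ← Complex.star_def, ← trace_conjTranspose, conjTranspose_mul,
    hX.eq, hY.eq, trace_mul_comm]

section Gram

variable [DecidableEq ι] {M : ι → Matrix n n ℂ} {a c : ℝ}

lemma re_trace_sum_smul_mul_self
    (hgram : ∀ α β, (M α * M β).trace = if α = β then (a : ℂ) else c) (w : ι → ℝ) :
    ((∑ α, (w α : ℂ) • M α) * ∑ α, (w α : ℂ) • M α).trace.re =
      (a - c) * ∑ α, w α ^ 2 + c * (∑ α, w α) ^ 2 := by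
  have hentry : ∀ α β, (((w α : ℂ) • M α) * ((w β : ℂ) • M β)).trace.re =
      c * (w α * w β) + if α = β then (a - c) * w α ^ 2 else 0 := by
    intro α β
    rw [smul_mul_smul, trace_smul, hgram, smul_eq_mul]
    split_ifs with h
    · subst h
      rw [← Complex.ofReal_mul, ← Complex.ofReal_mul, Complex.ofReal_re]
      ring
    · rw [← Complex.ofReal_mul, ← Complex.ofReal_mul, Complex.ofReal_re]
      ring
  simp only [Finset.sum_mul, Finset.mul_sum, trace_sum, Complex.re_sum, hentry,
    Finset.sum_add_distrib, Finset.sum_ite_eq', Finset.mem_univ, if_true]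
  rw [sq (∑ α, w α), Finset.sum_mul_sum, Finset.sum_comm, add_comm]
  simp only [Finset.mul_sum]

lemma two_mul_sum_sub_le_re_trace_mul_self (hM : ∀ α, (M α).IsHermitian)
    (hgram : ∀ α β, (M α * M β).trace = if α = β then (a : ℂ) else c)
    {σ : Matrix n n ℂ} (hσ : σ.IsHermitian) (w : ι → ℝ) :
    2 * ∑ α, w α * (M α * σ).trace.re - ((a - c) * ∑ α, w α ^ 2 + c * (∑ α, w α) ^ 2) ≤
      (σ * σ).trace.re := by
  set N := ∑ α, (w α : ℂ) • M α
  have hN : N.IsHermitian := isSelfAdjoint_sum _ fun α _ => (hM α).smul (Complex.conj_ofReal _)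
  have hNσ : (N * σ).trace.re = ∑ α, w α * (M α * σ).trace.re := by
    simp [N, Finset.sum_mul, trace_sum, Complex.re_sum, trace_smul]
  have hsq : 0 ≤ ((σ - N) * (σ - N)).trace.re := by
    have := frobenius_norm_sq_eq_re_trace (σ - N)
    rw [(hσ.sub hN).eq] at this
    exact this ▸ sq_nonneg _
  rw [Matrix.sub_mul, Matrix.mul_sub, Matrix.mul_sub, trace_sub, trace_sub, trace_sub,
    trace_mul_comm σ N] at hsq
  simp only [Complex.sub_re] at hsq
  rw [← hNσ, ← re_trace_sum_smul_mul_self hgram w]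
  linarith

/-- Bessel's inequality for a Hermitian family whose Gram matrix is `(a - c) I + c J`. -/
lemma sum_sq_re_trace_mul_le (hM : ∀ α, (M α).IsHermitian)
    (hgram : ∀ α β, (M α * M β).trace = if α = β then (a : ℂ) else c) (hca : c < a)
    (hu : 0 < a + (Fintype.card ι - 1) * c) {σ : Matrix n n ℂ} (hσ : σ.IsHermitian) :
    ∑ α, (M α * σ).trace.re ^ 2 ≤
      (a - c) * (σ * σ).trace.re +
        c * (∑ α, (M α * σ).trace.re) ^ 2 / (a + (Fintype.card ι - 1) * c) :=
  sum_sq_le_of_forall_two_mul_sum_sub_le hca hu (two_mul_sum_sub_le_re_trace_mul_self hM hgram hσ)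

end Gram

lemma trace_kronecker_mul_sum_smul_kronecker (p : κ → ℝ) (ρA : κ → Matrix m m ℂ)
    (ρB : κ → Matrix n n ℂ) (X : Matrix m m ℂ) (Y : Matrix n n ℂ) :
    ((X ⊗ₖ Y) * ∑ i, (p i : ℂ) • (ρA i ⊗ₖ ρB i)).trace =
      ∑ i, (p i : ℂ) * ((X * ρA i).trace * (Y * ρB i).trace) := by
  simp only [Matrix.mul_sum, trace_sum, Matrix.mul_smul, trace_smul, smul_eq_mul,
    ← mul_kronecker_mul, trace_kronecker]

lemma frobenius_norm_of_sqrt_mul_le {p : κ → ℝ} (hp : ∀ i, 0 ≤ p i) (hp1 : ∑ i, p i = 1)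
    {x : ι → κ → ℂ} {b : ℝ} (hx : ∀ i, ∑ α, ‖x α i‖ ^ 2 ≤ b) :
    ‖of fun α i => (√(p i) : ℂ) * x α i‖ ≤ √b := by
  refine Real.le_sqrt_of_sq_le ?_
  calc ‖of fun α i => (√(p i) : ℂ) * x α i‖ ^ 2 = ∑ i, p i * ∑ α, ‖x α i‖ ^ 2 := by
        simp only [frobenius_norm_sq_eq_sum, of_apply, norm_mul, Complex.norm_real,
          Real.norm_eq_abs, abs_of_nonneg (Real.sqrt_nonneg _), mul_pow, Real.sq_sqrt (hp _),
          Finset.mul_sum]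
        exact Finset.sum_comm
    _ ≤ ∑ i, p i * b := Finset.sum_le_sum fun i _ => mul_le_mul_of_nonneg_left (hx i) (hp i)
    _ = b := by rw [← Finset.sum_mul, hp1, one_mul]

end Matrix

lemma IsDensityMatrix.re_trace_mul_self_le_one {n : Type*} [Fintype n] {σ : Matrix n n ℂ}
    (hσ : IsDensityMatrix σ) : (σ * σ).trace.re ≤ 1 := by
  have hnorm : ‖σ‖ ≤ 1 := by simpa [hσ.2] using hσ.1.frobenius_norm_le_re_trace
  have hsq := Matrix.frobenius_norm_sq_eq_re_trace σ
  rw [hσ.1.1.eq] at hsq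
  nlinarith [norm_nonneg σ]

namespace IsGSICPOVM

variable {d : ℕ} {a : ℝ} {M : Fin (d ^ 2) → Matrix (Fin d) (Fin d) ℂ}

lemma two_le (hM : IsGSICPOVM d a M) : 2 ≤ d := by
  obtain ⟨-, -, -, -, hlow, hup⟩ := hM
  by_contra! hd
  interval_cases d <;> norm_num at hlow hup <;> linarith

lemma trace_mul_eq_ite (hM : IsGSICPOVM d a M) (α β : Fin (d ^ 2)) :
    (M α * M β).trace =
      if α = β then (a : ℂ) else (((1 - d * a) / (d * (d ^ 2 - 1)) : ℝ) : ℂ) := by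
  split_ifs with h
  · exact h ▸ hM.2.2.1 α
  · exact hM.2.2.2.1 α β h

lemma sum_norm_trace_mul_sq_le (hM : IsGSICPOVM d a M) {σ : Matrix (Fin d) (Fin d) ℂ}
    (hσ : IsDensityMatrix σ) :
    ∑ α, ‖(M α * σ).trace‖ ^ 2 ≤ (a * d ^ 2 + 1) / (d * (d + 1)) := by
  set c : ℝ := (1 - d * a) / (d * (d ^ 2 - 1))
  have hgram : ∀ α β, (M α * M β).trace = if α = β then (a : ℂ) else c := hM.trace_mul_eq_ite
  have hd : (2 : ℝ) ≤ d := by exact_mod_cast hM.two_le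
  have hden : 0 < (d : ℝ) * (d ^ 2 - 1) := by nlinarith
  have hc : c * (d * (d ^ 2 - 1)) = 1 - d * a := div_mul_cancel₀ _ hden.ne'
  clear_value c
  obtain ⟨hpsd, hsum, -, -, hlow, -⟩ := hM
  have hca : c < a := by
    rw [div_lt_iff₀ (by positivity)] at hlow
    nlinarith
  have hu : a + ((Fintype.card (Fin (d ^ 2)) : ℝ) - 1) * c = 1 / d := by
    rw [Fintype.card_fin, eq_div_iff (by positivity)]
    push_cast
    linear_combination hc
  have hT : ∑ α, (M α * σ).trace.re = 1 := by
    rw [← Complex.re_sum, ← Matrix.trace_sum, ← Matrix.sum_mul, hsum, Matrix.one_mul, hσ.2,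
      Complex.one_re]
  have hbessel := Matrix.sum_sq_re_trace_mul_le (fun α => (hpsd α).1) hgram hca
    (hu ▸ by positivity) hσ.1.1
  rw [hu, hT] at hbessel
  have hnorm : ∀ α, ‖(M α * σ).trace‖ ^ 2 = (M α * σ).trace.re ^ 2 := fun α => by
    rw [← (hpsd α).1.ofReal_re_trace_mul hσ.1.1, Complex.norm_real, Real.norm_eq_abs, sq_abs,
      Complex.ofReal_re]
  have hvalue : (a * d ^ 2 + 1) / (d * (d + 1)) = (a - c) + c * d := by
    rw [div_eq_iff (by positivity)]
    linear_combination -hc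
  simp only [hnorm, hvalue]
  nlinarith [hσ.re_trace_mul_self_le_one, sub_pos.mpr hca]

end IsGSICPOVM

theorem separability_criterion_GSIC_correlation_general
    (dA dB : ℕ) (aA aB : ℝ)
    (MA : Fin (dA ^ 2) → Matrix (Fin dA) (Fin dA) ℂ)
    (MB : Fin (dB ^ 2) → Matrix (Fin dB) (Fin dB) ℂ)
    (hMA : IsGSICPOVM dA aA MA) (hMB : IsGSICPOVM dB aB MB)
    (ρ : Matrix (Fin dA × Fin dB) (Fin dA × Fin dB) ℂ)
    (hsep : SeparableState ρ) :
    traceNorm (Matrix.of fun (α : Fin (dA ^ 2)) (β : Fin (dB ^ 2)) =>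
        ((MA α ⊗ₖ MB β) * ρ).trace) ≤
    Real.sqrt ((aA * (dA : ℝ) ^ 2 + 1) / ((dA : ℝ) * ((dA : ℝ) + 1))) *
    Real.sqrt ((aB * (dB : ℝ) ^ 2 + 1) / ((dB : ℝ) * ((dB : ℝ) + 1))) := by
  obtain ⟨K, p, ρA, ρB, hp, hp1, hρA, hρB, rfl⟩ := hsep
  set C := of fun α i => (√(p i) : ℂ) * (MA α * ρA i).trace
  set D := of fun β i => (√(p i) : ℂ) * (MB β * ρB i).trace
  have hG : (of fun α β => ((MA α ⊗ₖ MB β) * ∑ i, (p i : ℂ) • (ρA i ⊗ₖ ρB i)).trace) =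
      C * Dᵀ := by
    ext α β
    simp only [of_apply, trace_kronecker_mul_sum_smul_kronecker, mul_apply, transpose_apply, C, D]
    refine Finset.sum_congr rfl fun i _ => ?_
    rw [mul_mul_mul_comm, ← Complex.ofReal_mul, Real.mul_self_sqrt (hp i)]
  rw [hG]
  calc traceNorm (C * Dᵀ) ≤ ‖C‖ * ‖Dᵀ‖ := traceNorm_mul_le C Dᵀ
    _ = ‖C‖ * ‖D‖ := by rw [frobenius_norm_transpose]
    _ ≤ _ := mul_le_mul
        (frobenius_norm_of_sqrt_mul_le hp hp1 fun i => hMA.sum_norm_trace_mul_sq_le (hρA i))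
        (frobenius_norm_of_sqrt_mul_le hp hp1 fun i => hMB.sum_norm_trace_mul_sq_le (hρB i))
        (norm_nonneg _) (Real.sqrt_nonneg _)

/-- for a separable bipartite state ρ_AB and GSIC-POVMs with
parameters a_A, a_B on the two subsystems, the matrix G(ρ_AB) with entries
tr((M^A_α ⊗ M^B_β) ρ_AB) satisfies
‖G(ρ_AB)‖_tr ≤ √((a_A d_A²+1)/(d_A(d_A+1))) · √((a_B d_B²+1)/(d_B(d_B+1))). -/
theorem separability_criterion_GSIC_correlation
    (dA dB : ℕ) (aA aB : ℝ)
    (MA : Fin (dA ^ 2) → Matrix (Fin dA) (Fin dA) ℂ)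
    (MB : Fin (dB ^ 2) → Matrix (Fin dB) (Fin dB) ℂ)
    (hMA : IsGSICPOVM dA aA MA) (hMB : IsGSICPOVM dB aB MB)
    (ρ : Matrix (Fin dA × Fin dB) (Fin dA × Fin dB) ℂ)
    (hρ : IsDensityMatrix ρ) (hsep : SeparableState ρ) :
    traceNorm (Matrix.of fun (α : Fin (dA ^ 2)) (β : Fin (dB ^ 2)) =>
        ((MA α ⊗ₖ MB β) * ρ).trace) ≤
    Real.sqrt ((aA * (dA : ℝ) ^ 2 + 1) / ((dA : ℝ) * ((dA : ℝ) + 1))) *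
    Real.sqrt ((aB * (dB : ℝ) ^ 2 + 1) / ((dB : ℝ) * ((dB : ℝ) + 1))) :=
  separability_criterion_GSIC_correlation_general dA dB aA aB MA MB hMA hMB ρ hsep
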